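/- Let Σ be a symmetric positive-definite K×K matrix with Σ^{-1} having nonnegative entries, and μ ∈ ℝ^K. Then the function g(θ) = -½ (log θ - μ)ᵀ Σ^{-1} (log θ - μ) is concave on the convex set S = {θ ∈ Δ : θ_k > 0 and log θ_k ≤ μ_k for all k}, where Δ is the unit simplex in ℝ^K. -/

import Mathlib

/-!
The map `θ ↦ log θ - μ` is componentwise concave on `S` and sends `S` into the nonpositive
orthant. There the quadratic form `x ↦ xᵀ A x` is convex (`A` is positive semidefinite) and
antitone (`A` has nonnegative entries), so its composition with a concave map is convex.
-/

open Matrix Set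

theorem ConvexOn.comp_concaveOn_of_mapsTo {𝕜 E F β : Type*} [Semiring 𝕜] [PartialOrder 𝕜]
    [AddCommMonoid E] [AddCommMonoid F] [PartialOrder F] [AddCommMonoid β] [PartialOrder β]
    [SMul 𝕜 E] [SMul 𝕜 F] [SMul 𝕜 β] {s : Set E} {t : Set F} {f : E → F} {g : F → β}
    (hg : ConvexOn 𝕜 t g) (hf : ConcaveOn 𝕜 s f) (hg' : AntitoneOn g t) (hst : MapsTo f s t) :
    ConvexOn 𝕜 s (g ∘ f) := by
  refine ⟨hf.1, fun x hx y hy a b ha hb hab => ?_⟩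
  have hcomb : a • f x + b • f y ∈ t := hg.1 (hst hx) (hst hy) ha hb hab
  calc g (f (a • x + b • y)) ≤ g (a • f x + b • f y) :=
        hg' hcomb (hst (hf.1 hx hy ha hb hab)) (hf.2 hx hy ha hb hab)
    _ ≤ a • g (f x) + b • g (f y) := hg.2 (hst hx) (hst hy) ha hb hab

theorem concaveOn_pi {𝕜 E ι : Type*} {β : ι → Type*} [Semiring 𝕜] [PartialOrder 𝕜]
    [AddCommMonoid E] [SMul 𝕜 E] [∀ i, AddCommMonoid (β i)] [∀ i, PartialOrder (β i)]
    [∀ i, SMul 𝕜 (β i)] {s : Set E} {f : E → ∀ i, β i} (hs : Convex 𝕜 s)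
    (hf : ∀ i, ConcaveOn 𝕜 s fun x => f x i) : ConcaveOn 𝕜 s f :=
  ⟨hs, fun _ hx _ hy _ _ ha hb hab i => (hf i).2 hx hy ha hb hab⟩

namespace Matrix

variable {n : Type*} [Fintype n]

theorem PosSemidef.convexOn_dotProduct_mulVec {A : Matrix n n ℝ} (hA : A.PosSemidef) :
    ConvexOn ℝ univ fun x => x ⬝ᵥ A *ᵥ x := by
  refine ⟨convex_univ, fun x _ y _ a b ha hb hab => ?_⟩
  have hxy : 0 ≤ (x - y) ⬝ᵥ A *ᵥ (x - y) := by
    simpa using hA.dotProduct_mulVec_nonneg (x - y)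
  have key : a * (x ⬝ᵥ A *ᵥ x) + b * (y ⬝ᵥ A *ᵥ y)
      - (a • x + b • y) ⬝ᵥ A *ᵥ (a • x + b • y)
      = a * b * ((x - y) ⬝ᵥ A *ᵥ (x - y)) := by
    simp only [mulVec_add, mulVec_smul, mulVec_sub, add_dotProduct, dotProduct_add,
      smul_dotProduct, dotProduct_smul, sub_dotProduct, dotProduct_sub, smul_eq_mul]
    linear_combination (-(a * (x ⬝ᵥ A *ᵥ x) + b * (y ⬝ᵥ A *ᵥ y))) * hab
  simp only [smul_eq_mul]
  nlinarith [mul_nonneg (mul_nonneg ha hb) hxy]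

theorem antitoneOn_dotProduct_mulVec_of_nonneg {R : Type*} [CommRing R] [LinearOrder R]
    [IsStrictOrderedRing R] {A : Matrix n n R} (hA : ∀ i j, 0 ≤ A i j) :
    AntitoneOn (fun x => x ⬝ᵥ A *ᵥ x) (Iic 0) := by
  intro x hx y hy hxy
  simp only [dotProduct, mulVec, Finset.mul_sum]
  refine Finset.sum_le_sum fun i _ => Finset.sum_le_sum fun j _ => ?_
  have hyy : y i * y j ≤ x i * y j := mul_le_mul_of_nonpos_right (hxy i) (hy j)
  have hxx : x i * y j ≤ x i * x j := mul_le_mul_of_nonpos_left (hxy j) (hx i)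
  nlinarith [hA i j]

end Matrix

theorem convex_setOf_forall_pos_and_log_le {ι : Type*} (μ : ι → ℝ) :
    Convex ℝ {θ : ι → ℝ | ∀ k, 0 < θ k ∧ Real.log (θ k) ≤ μ k} := by
  have h : {θ : ι → ℝ | ∀ k, 0 < θ k ∧ Real.log (θ k) ≤ μ k}
      = univ.pi fun k => Ioc 0 (Real.exp (μ k)) := by
    ext θ
    simp only [mem_ofPred_eq, mem_univ_pi, mem_Ioc]
    exact forall_congr' fun k => and_congr_right Real.log_le_iff_le_exp
  exact h ▸ convex_pi fun k _ => convex_Ioc _ _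

/-- With mean `μ`, `g(θ) = -½ (log θ - μ)ᵀ Σ⁻¹ (log θ - μ)` is concave on the convex
set `S = {θ ∈ Δ : θ k > 0 and log θ k ≤ μ k for all k}`, where `Σ⁻¹ = A` is symmetric
positive definite with nonnegative entries. -/
theorem ctm_full_prior_concave {K : ℕ} (A : Matrix (Fin K) (Fin K) ℝ)
    (hA_pd : A.PosDef) (hA_nonneg : ∀ i j, 0 ≤ A i j) (μ : Fin K → ℝ) :
    ConcaveOn ℝ
      {θ : Fin K → ℝ | θ ∈ stdSimplex ℝ (Fin K) ∧ ∀ k, 0 < θ k ∧ Real.log (θ k) ≤ μ k}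
      (fun θ => -(1 / 2) *
        ((fun i => Real.log (θ i) - μ i) ⬝ᵥ A.mulVec fun i => Real.log (θ i) - μ i)) := by
  set S :=
    {θ : Fin K → ℝ | θ ∈ stdSimplex ℝ (Fin K) ∧ ∀ k, 0 < θ k ∧ Real.log (θ k) ≤ μ k}
  have hS : Convex ℝ S :=
    (convex_stdSimplex ℝ (Fin K)).inter (convex_setOf_forall_pos_and_log_le μ)
  have hlog : ConcaveOn ℝ S fun θ i => Real.log (θ i) - μ i :=
    concaveOn_pi hS fun i =>
      ((strictConcaveOn_log_Ioi.concaveOn.comp_linearMap (LinearMap.proj i)).subset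
        (fun θ hθ => (hθ.2 i).1) hS).add_const (-μ i)
  have hmaps : MapsTo (fun θ i => Real.log (θ i) - μ i) S (Iic 0) :=
    fun θ hθ i => sub_nonpos.2 (hθ.2 i).2
  have hquad := (hA_pd.posSemidef.convexOn_dotProduct_mulVec.subset (subset_univ _)
    (convex_Iic 0)).comp_concaveOn_of_mapsTo hlog
    (antitoneOn_dotProduct_mulVec_of_nonneg hA_nonneg) hmaps
  refine ((hquad.smul (by norm_num : (0 : ℝ) ≤ 1 / 2)).neg).congr fun θ _ => ?_
  simp only [Pi.neg_apply, Function.comp_apply, smul_eq_mul]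
  ring
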